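/- arXiv:2102.09476 — 5 statements merged into one kernel-verified Lean document; each statement's English description precedes it below -/
import Mathlib

section
/- Let A be a Noetherian commutative ring, J ⊆ A an ideal admitting a minimal primary decomposition J = q₁ ∩ ⋯ ∩ q_m, and let p = √q_j be a minimal prime divisor of J. Then there exists h ∈ A \ q_j such that h·p ⊆ J. -/
/-!
Let `Q = ⋂_{i ≠ j} q_i`. Irredundancy gives `Q ⊄ q_j`, while `p ^ n ⊆ q_j` for some `n` since `A`
is Noetherian, so `Q * p ^ n ⊆ q_j`. For the least `k` with `Q * p ^ k ⊆ q_j` (necessarily `k ≥ 1`),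
any `h ∈ Q * p ^ (k - 1)` outside `q_j` has `h * p ⊆ q_j`, and `h * p ⊆ Q ⊆ q_i` for `i ≠ j`.
-/

namespace Ideal

variable {R : Type*} [CommRing R]

theorem exists_mem_notMem_mul_mem_of_mul_pow_le {Q P I : Ideal R} {n : ℕ}
    (hle : Q * P ^ n ≤ I) (hQ : ¬ Q ≤ I) :
    ∃ h ∈ Q, h ∉ I ∧ ∀ x ∈ P, h * x ∈ I := by
  induction n generalizing Q with
  | zero => exact absurd (by simpa using hle) hQ
  | succ n ih =>
    by_cases hQP : Q * P ≤ I
    · obtain ⟨h, hhQ, hhI⟩ := SetLike.not_le_iff_exists.mp hQ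
      exact ⟨h, hhQ, hhI, fun x hx => hQP (mul_mem_mul hhQ hx)⟩
    · obtain ⟨h, hhQP, hhI, hhP⟩ := ih (by rwa [mul_assoc, ← pow_succ']) hQP
      exact ⟨h, mul_le_left hhQP, hhI, hhP⟩

end Ideal

theorem stmt_4_general {A : Type*} [CommRing A] [IsNoetherianRing A] {m : ℕ}
    (q : Fin m → Ideal A) (J : Ideal A) (hJ : J = ⨅ i, q i)
    (hirred : ∀ j, ¬ (⨅ i ∈ {i | i ≠ j}, q i) ≤ q j)
    (j : Fin m) (p : Ideal A) (hp : p = (q j).radical) :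
    ∃ h : A, h ∉ q j ∧ ∀ x ∈ p, h * x ∈ J := by
  obtain ⟨n, hpn⟩ : ∃ n, p ^ n ≤ q j :=
    hp ▸ Ideal.exists_radical_pow_le_of_fg (q j) (IsNoetherian.noetherian _)
  obtain ⟨h, hQ, hhj, hhp⟩ :=
    Ideal.exists_mem_notMem_mul_mem_of_mul_pow_le (Ideal.mul_le_right.trans hpn) (hirred j)
  refine ⟨h, hhj, fun x hx => ?_⟩
  rw [hJ, Ideal.mem_iInf]
  intro i
  by_cases hij : i = j
  · exact hij ▸ hhp x hx
  · exact Ideal.mul_mem_right x _ (biInf_le q (show i ∈ {i | i ≠ j} from hij) hQ)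

theorem stmt_4 {A : Type*} [CommRing A] [IsNoetherianRing A] {m : ℕ}
    (q : Fin m → Ideal A) (J : Ideal A) (hJ : J = ⨅ i, q i)
    (hprim : ∀ i, (q i).IsPrimary)
    (hirred : ∀ j, ¬ (⨅ i ∈ {i | i ≠ j}, q i) ≤ q j)
    (hdist : ∀ i j, i ≠ j → (q i).radical ≠ (q j).radical)
    (j : Fin m) (p : Ideal A) (hp : p = (q j).radical)
    (hmin : ∀ i, ¬ (q i).radical < p) :
    ∃ h : A, h ∉ q j ∧ ∀ x ∈ p, h * x ∈ J :=
  stmt_4_general q J hJ hirred j p hp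
end

section
/- Let A be a Noetherian commutative ring, M an A-module, and p a minimal prime over the annihilator Ann_A(M). Suppose there exists h ∈ A \ q (for some p-primary component q of Ann_A(M)) with h·p ⊆ Ann_A(M). Then Ann_A(M ⊗_A A/p) = p. -/
open scoped TensorProduct
theorem stmt_5 {A : Type*} [CommRing A] [IsNoetherianRing A]
    {M : Type*} [AddCommGroup M] [Module A M]
    (p : Ideal A) (hp : p ∈ (Module.annihilator A M).minimalPrimes)
    (q : Ideal A) (hq : q.IsPrimary) (hqp : q.radical = p)
    (hcomp : Module.annihilator A M ≤ q)
    (h : A) (hhq : h ∉ q) (hhp : ∀ x ∈ p, h * x ∈ Module.annihilator A M) :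
    Module.annihilator A (M ⊗[A] (A ⧸ p)) = p := by
  have hsmul : ∀ z ∈ (p • ⊤ : Submodule A M), h • z = 0 := by
    intro z hz
    refine Submodule.smul_induction_on hz ?_ ?_
    · intro x hx n _
      rw [smul_smul]
      exact Module.mem_annihilator.mp (hhp x hx) n
    · intro x y hx hy
      rw [smul_add, hx, hy, add_zero]
  apply le_antisymm
  · intro a ha
    rw [Module.mem_annihilator] at ha
    have key : ∀ m : M, a • m ∈ (p • ⊤ : Submodule A M) := by
      intro m
      have h0 : a • (m ⊗ₜ[A] (Ideal.Quotient.mk p 1)) = 0 := ha _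
      rw [TensorProduct.smul_tmul'] at h0
      have h2 := congrArg (TensorProduct.tensorQuotEquivQuotSMul M p) h0
      rw [map_zero, TensorProduct.tensorQuotEquivQuotSMul_tmul_mk, one_smul] at h2
      rwa [Submodule.Quotient.mk_eq_zero] at h2
    have hha : h * a ∈ Module.annihilator A M := by
      rw [Module.mem_annihilator]
      intro m
      rw [mul_smul]
      exact hsmul _ (key m)
    rcases (Ideal.isPrimary_iff.mp hq).2 (hcomp hha) with h1 | h2
    · exact absurd h1 hhq
    · rwa [hqp] at h2
  · intro a ha
    rw [Module.mem_annihilator]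
    intro m
    induction m using TensorProduct.induction_on with
    | zero => simp
    | tmul x y =>
      obtain ⟨r, rfl⟩ := Ideal.Quotient.mk_surjective y
      have h1 : a • (Ideal.Quotient.mk p r) = Ideal.Quotient.mk p (a * r) := rfl
      rw [← TensorProduct.tmul_smul, h1,
        Ideal.Quotient.eq_zero_iff_mem.mpr (p.mul_mem_right r ha),
        TensorProduct.tmul_zero]
    | add x y hx hy => rw [smul_add, hx, hy, add_zero]
end

section
/- Let A be a Noetherian commutative ring, M an A-module, and p a minimal prime divisor of Ann_A(M). Then Ann_A(M/pM) = p. -/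
/-- For a finite set, combine the witnesses `s g` into a single `s` by multiplying. -/
lemma aux_common_mult {A : Type*} [CommRing A] {I p : Ideal A} (hpP : p.IsPrime)
    (T : Finset A) (h : ∀ g ∈ T, ∃ s, s ∉ p ∧ s * g ∈ I) :
    ∃ s, s ∉ p ∧ ∀ g ∈ T, s * g ∈ I := by
  classical
  induction T using Finset.induction_on with
  | empty =>
      refine ⟨1, fun h1 => hpP.ne_top (p.eq_top_iff_one.2 h1), by simp⟩
  | @insert a T ha ih =>
      obtain ⟨s, hs, hsT⟩ := ih fun g hg => h g (Finset.mem_insert_of_mem hg)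
      obtain ⟨sa, hsa, hsaI⟩ := h a (Finset.mem_insert_self a T)
      refine ⟨sa * s, fun hm => ((hpP.mem_or_mem hm).elim hsa hs), ?_⟩
      intro g hg
      rcases Finset.mem_insert.1 hg with rfl | hg
      · have : sa * s * g = s * (sa * g) := by ring
        rw [this]; exact I.mul_mem_left _ hsaI
      · have : sa * s * g = sa * (s * g) := by ring
        rw [this]; exact I.mul_mem_left _ (hsT g hg)

/-- If `p` is minimal over `I` in a Noetherian ring, then some `s ∉ p` kills `p ^ n` mod `I`. -/
lemma aux_min {A : Type*} [CommRing A] [IsNoetherianRing A] {I p : Ideal A}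
    (hp : p ∈ I.minimalPrimes) : ∃ n : ℕ, ∃ s : A, s ∉ p ∧ ∀ x ∈ p ^ n, s * x ∈ I := by
  haveI hpP : p.IsPrime := hp.1.1
  classical
  set L := Localization.AtPrime p
  let f : A →+* L := algebraMap A L
  have hrad : p.map f ≤ (I.map f).radical := by
    rw [Ideal.radical_eq_sInf]
    refine le_sInf ?_
    rintro J ⟨hIJ, hJp⟩
    rw [Ideal.map_le_iff_le_comap]
    have hcp : J.comap f ≤ p := by
      intro x hx
      by_contra hxp
      have hu : IsUnit (f x) := IsLocalization.map_units L (⟨x, hxp⟩ : p.primeCompl)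
      exact hJp.ne_top (J.eq_top_of_isUnit_mem hx hu)
    have hprime : (J.comap f).IsPrime := hJp.comap f
    have hIc : I ≤ J.comap f := le_trans Ideal.le_comap_map (Ideal.comap_mono hIJ)
    exact hp.2 ⟨hprime, hIc⟩ hcp
  have hfg : (p.map f).FG := Ideal.FG.map (IsNoetherian.noetherian p) f
  obtain ⟨n, hn⟩ := Ideal.exists_pow_le_of_le_radical_of_fg hrad hfg
  have hpn : (p ^ n).map f ≤ I.map f := by rw [Ideal.map_pow]; exact hn
  obtain ⟨T, hT⟩ := IsNoetherian.noetherian (p ^ n)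
  have key : ∀ g ∈ T, ∃ s, s ∉ p ∧ s * g ∈ I := by
    intro g hg
    have hgp : g ∈ p ^ n := by rw [← hT]; exact Submodule.subset_span hg
    have hfg' : f g ∈ I.map f := hpn (Ideal.mem_map_of_mem f hgp)
    obtain ⟨⟨⟨b, hb⟩, s⟩, h⟩ :=
      (IsLocalization.mem_map_algebraMap_iff p.primeCompl L).1 hfg'
    rw [← map_mul] at h
    obtain ⟨c, hc⟩ := (IsLocalization.eq_iff_exists p.primeCompl L).1 h
    refine ⟨(c : A) * (s : A), (c * s).2, ?_⟩
    have : (c : A) * (s : A) * g = (c : A) * (g * (s : A)) := by ring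
    rw [this, hc]
    exact I.mul_mem_left _ hb
  obtain ⟨s, hs, hsT⟩ := aux_common_mult hpP T key
  refine ⟨n, s, hs, ?_⟩
  intro x hx
  rw [← hT] at hx
  refine Submodule.span_induction (p := fun x _ => s * x ∈ I) (fun g hg => hsT g hg) ?_ ?_ ?_ hx
  · simp
  · intro x y _ _ hx hy
    rw [mul_add]; exact I.add_mem hx hy
  · intro r x _ hx
    rw [smul_eq_mul, mul_comm r x, ← mul_assoc]
    exact I.mul_mem_right r hx

theorem stmt_6 {A : Type*} [CommRing A] [IsNoetherianRing A]
    {M : Type*} [AddCommGroup M] [Module A M]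
    (p : Ideal A) (hp : p ∈ (Module.annihilator A M).minimalPrimes) :
    Module.annihilator A (M ⧸ (p • ⊤ : Submodule A M)) = p := by
  haveI hpP : p.IsPrime := hp.1.1
  apply le_antisymm
  · intro a ha
    rw [Module.mem_annihilator] at ha
    have haM : ∀ m : M, a • m ∈ (p • ⊤ : Submodule A M) := by
      intro m
      have := ha (Submodule.Quotient.mk m)
      rwa [← Submodule.Quotient.mk_smul, Submodule.Quotient.mk_eq_zero] at this
    have hpow : ∀ k : ℕ, ∀ m : M, a ^ k • m ∈ (p ^ k • ⊤ : Submodule A M) := by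
      intro k
      induction k with
      | zero => intro m; simp [Ideal.one_eq_top]
      | succ k ih =>
          intro m
          have h1 : a ^ (k + 1) • m = a • (a ^ k • m) := by
            rw [pow_succ, mul_comm, mul_smul]
          rw [h1, pow_succ, ← Ideal.smul_eq_mul, Submodule.smul_assoc]
          refine Submodule.smul_induction_on (ih m) ?_ ?_
          · intro r hr x _
            have : a • r • x = r • (a • x) := smul_comm a r x
            rw [this]
            exact Submodule.smul_mem_smul hr (haM x)
          · intro x y hx hy
            rw [smul_add]; exact Submodule.add_mem _ hx hy
    obtain ⟨n, s, hs, hsp⟩ := aux_min hp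
    have hann : s * a ^ n ∈ Module.annihilator A M := by
      rw [Module.mem_annihilator]
      intro m
      rw [mul_smul]
      refine Submodule.smul_induction_on (hpow n m) ?_ ?_
      · intro r hr x _
        rw [← mul_smul]
        exact Module.mem_annihilator.1 (hsp r hr) x
      · intro x y hx hy
        rw [smul_add, hx, hy, add_zero]
    have hsp' : s * a ^ n ∈ p := hp.1.2 hann
    rcases hpP.mem_or_mem hsp' with h | h
    · exact absurd h hs
    · exact hpP.mem_of_pow_mem n h
  · intro r hr
    rw [Module.mem_annihilator]
    intro x
    obtain ⟨m, rfl⟩ := Submodule.Quotient.mk_surjective _ x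
    rw [← Submodule.Quotient.mk_smul, Submodule.Quotient.mk_eq_zero]
    exact Submodule.smul_mem_smul hr trivial
end

section
/- Let R be a ring, A a commutative Noetherian subring of the center of R, J a left ideal of R, and p a minimal prime divisor of the ideal J ∩ A of A. Then (J + Rp) ∩ A = p. -/
/-!
Let `f = algebraMap A R` and `I = f⁻¹(J)`. Call a left ideal `L ⊇ J` good if `f⁻¹(L) ⊆ p`; we show
that adjoining `f q` to a good `L`, for `q ∈ p`, keeps it good. Minimality of `p` over `I` gives
`t ∉ p` and `n` with `t qⁿ ∈ I`. If `f s ∈ L + R f q` with `s ∉ p`, then, `f s` and `f q` being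
central, `f sⁿ ∈ L + R f qⁿ`, so `f (t sⁿ) ∈ L`; but `t sⁿ ∉ p`. Since every element of `R f(p)` is
reached from `J` by finitely many such steps, `f⁻¹(J + R f(p)) ⊆ p`.
-/

theorem Ideal.exists_mul_pow_mem_of_mem_minimalPrimes {A : Type*} [CommSemiring A]
    {I p : Ideal A} (hp : p ∈ I.minimalPrimes) {x : A} (hx : x ∈ p) :
    ∃ t ∉ p, ∃ n : ℕ, t * x ^ n ∈ I := by
  have := hp.1.1
  obtain ⟨n, hn⟩ : algebraMap A (Localization.AtPrime p) x ∈
      (I.map (algebraMap A (Localization.AtPrime p))).radical := by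
    rw [IsLocalization.AtPrime.radical_map_of_mem_minimalPrimes _ p I hp]
    exact Ideal.mem_map_of_mem _ hx
  rw [← map_pow, ← IsLocalization.mk'_one (M := p.primeCompl),
    IsLocalization.mk'_mem_map_algebraMap_iff] at hn
  obtain ⟨t, ht, htx⟩ := hn
  exact ⟨t, ht, n, htx⟩

section

variable {A R : Type*} [CommSemiring A] [Semiring R] [Algebra A R]

theorem algebraMap_pow_mem_sup_span_singleton_pow {L : Ideal R} {x c : A}
    (h : algebraMap A R x ∈ L ⊔ Ideal.span {algebraMap A R c}) (n : ℕ) :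
    algebraMap A R (x ^ n) ∈ L ⊔ Ideal.span {algebraMap A R (c ^ n)} := by
  induction n with
  | zero => simp
  | succ n ih =>
    obtain ⟨l, hl, _, hrc, hx⟩ := Submodule.mem_sup.1 h
    obtain ⟨r, rfl⟩ := Ideal.mem_span_singleton'.1 hrc
    obtain ⟨l', hl', _, hrc', hxn⟩ := Submodule.mem_sup.1 ih
    obtain ⟨r', rfl⟩ := Ideal.mem_span_singleton'.1 hrc'
    have hsplit : algebraMap A R (x ^ (n + 1)) =
        algebraMap A R x * l' + r' * algebraMap A R (c ^ n) * l
          + r' * r * algebraMap A R (c ^ (n + 1)) := by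
      calc algebraMap A R (x ^ (n + 1))
          = algebraMap A R x * l' + r' * algebraMap A R (c ^ n) * algebraMap A R x := by
            rw [pow_succ', map_mul, ← hxn, mul_add, Algebra.commutes x (r' * _)]
        _ = _ := by
            rw [← hx, mul_add, add_assoc, pow_succ, map_mul]
            simp only [mul_assoc]
            rw [← mul_assoc _ r, Algebra.commutes (c ^ n) r, mul_assoc]
    rw [hsplit]
    refine add_mem (add_mem ?_ ?_) ?_
    · exact Submodule.mem_sup_left (L.mul_mem_left _ hl')
    · exact Submodule.mem_sup_left (L.mul_mem_left _ hl)
    · exact Submodule.mem_sup_right (Ideal.mem_span_singleton'.2 ⟨_, rfl⟩)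

variable {J L : Ideal R} {p : Ideal A}

theorem comap_sup_span_singleton_le (hp : p ∈ (J.comap (algebraMap A R)).minimalPrimes)
    (hJL : J ≤ L) (hL : L.comap (algebraMap A R) ≤ p) {q : A} (hq : q ∈ p) :
    (L ⊔ Ideal.span {algebraMap A R q}).comap (algebraMap A R) ≤ p := by
  intro x hx
  obtain ⟨t, htp, n, htq⟩ := Ideal.exists_mul_pow_mem_of_mem_minimalPrimes hp hq
  obtain ⟨l, hl, _, hrc, hxn⟩ :=
    Submodule.mem_sup.1 (algebraMap_pow_mem_sup_span_singleton_pow hx n)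
  obtain ⟨r, rfl⟩ := Ideal.mem_span_singleton'.1 hrc
  have htx : t * x ^ n ∈ L.comap (algebraMap A R) := by
    rw [Ideal.mem_comap, map_mul, ← hxn, mul_add, ← mul_assoc, Algebra.commutes t r, mul_assoc,
      ← map_mul]
    exact add_mem (L.mul_mem_left _ hl) (L.mul_mem_left _ (hJL htq))
  exact hp.1.1.mem_of_pow_mem n ((hp.1.1.mem_or_mem (hL htx)).resolve_left htp)

theorem comap_sup_span_singleton_le_of_mem_map
    (hp : p ∈ (J.comap (algebraMap A R)).minimalPrimes) {y : R}
    (hy : y ∈ p.map (algebraMap A R)) (hJL : J ≤ L) (hL : L.comap (algebraMap A R) ≤ p) :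
    (L ⊔ Ideal.span {y}).comap (algebraMap A R) ≤ p := by
  induction hy using Submodule.span_induction generalizing L with
  | mem _ hy =>
    obtain ⟨q, hq, rfl⟩ := hy
    exact comap_sup_span_singleton_le hp hJL hL hq
  | zero => simpa using hL
  | add y z _ _ hy hz =>
    refine (Ideal.comap_mono ?_).trans (hz (hJL.trans le_sup_left) (hy hJL hL))
    rw [sup_assoc]
    refine sup_le_sup_left ?_ L
    rw [Ideal.span_singleton_le_iff_mem]
    exact add_mem (Submodule.mem_sup_left (Ideal.mem_span_singleton_self y))
      (Submodule.mem_sup_right (Ideal.mem_span_singleton_self z))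
  | smul r y _ hy =>
    refine (Ideal.comap_mono (sup_le_sup_left ?_ L)).trans (hy hJL hL)
    rw [Ideal.span_singleton_le_iff_mem]
    exact Ideal.mul_mem_left _ r (Ideal.mem_span_singleton_self y)

end

theorem stmt_9_general {A R : Type*} [CommRing A] [Ring R] [Algebra A R]
    (J : Ideal R) (p : Ideal A)
    (hp : p ∈ (J.comap (algebraMap A R)).minimalPrimes) :
    (J ⊔ p.map (algebraMap A R)).comap (algebraMap A R) = p := by
  refine le_antisymm (fun a ha ↦ ?_) (Ideal.map_le_iff_le_comap.1 le_sup_right)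
  obtain ⟨j, hj, y, hy, hjy⟩ := Submodule.mem_sup.1 (Ideal.mem_comap.1 ha)
  refine comap_sup_span_singleton_le_of_mem_map hp hy le_rfl hp.1.2 ?_
  rw [Ideal.mem_comap, ← hjy]
  exact add_mem (Submodule.mem_sup_left hj)
    (Submodule.mem_sup_right (Ideal.mem_span_singleton_self y))

theorem stmt_9 {A R : Type*} [CommRing A] [IsNoetherianRing A] [Ring R] [Algebra A R]
    (hinj : Function.Injective (algebraMap A R))
    (J : Ideal R) (p : Ideal A)
    (hp : p ∈ (J.comap (algebraMap A R)).minimalPrimes) :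
    (J ⊔ p.map (algebraMap A R)).comap (algebraMap A R) = p :=
  stmt_9_general J p hp
end

section
/- Let A be a commutative ring and let N be the nilradical of A. If N is finitely generated by g₁, …, g_m and N ≠ 0, then there exists a nonzero element f ∈ A with f·gᵢ = 0 for all i; consequently f·N = 0 and f ∈ N. -/
theorem stmt_14 {A : Type*} [CommRing A] {m : ℕ} (g : Fin m → A)
    (hgen : Ideal.span (Set.range g) = nilradical A)
    (hne : nilradical A ≠ ⊥) :
    ∃ f : A, f ≠ 0 ∧ (∀ i, f * g i = 0) ∧ ∀ x ∈ nilradical A, f * x = 0 := by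
  have hnt : (1 : A) ≠ 0 := by
    intro h
    apply hne
    have : Subsingleton A := subsingleton_of_zero_eq_one h.symm
    exact Subsingleton.elim _ _
  have hgnil : ∀ i, IsNilpotent (g i) := by
    intro i
    have : g i ∈ Ideal.span (Set.range g) :=
      Ideal.subset_span ⟨i, rfl⟩
    rw [hgen] at this
    exact this
  -- Build f by recursion over the prefix length
  have key : ∀ n : ℕ, n ≤ m → ∃ f : A, f ≠ 0 ∧ ∀ j : Fin m, (j : ℕ) < n → f * g j = 0 := by
    intro n
    induction n with
    | zero => intro _; exact ⟨1, hnt, fun j hj => absurd hj (Nat.not_lt_zero _)⟩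
    | succ n ih =>
      intro hn
      obtain ⟨f, hf0, hf⟩ := ih (Nat.le_of_succ_le hn)
      set i : Fin m := ⟨n, hn⟩
      obtain ⟨N, hN⟩ := hgnil i
      have hex : ∃ k, f * g i ^ k = 0 := ⟨N, by rw [hN, mul_zero]⟩
      classical
      set k := Nat.find hex with hk
      have hks : f * g i ^ k = 0 := Nat.find_spec hex
      have hkpos : 0 < k := by
        rcases Nat.eq_zero_or_pos k with h | h
        · exfalso; apply hf0
          have := hks; rw [h, pow_zero, mul_one] at this; exact this
        · exact h
      refine ⟨f * g i ^ (k - 1), ?_, ?_⟩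
      · intro h
        exact Nat.find_min hex (Nat.sub_lt hkpos one_pos) h
      · intro j hj
        rcases Nat.lt_succ_iff_lt_or_eq.mp hj with h | h
        · rw [mul_assoc, mul_comm (g i ^ (k-1)), ← mul_assoc, hf j h, zero_mul]
        · have : j = i := Fin.ext h
          rw [this, mul_assoc, ← pow_succ, Nat.sub_add_cancel hkpos, hks]
  obtain ⟨f, hf0, hf⟩ := key m le_rfl
  have hall : ∀ i, f * g i = 0 := fun i => hf i i.isLt
  refine ⟨f, hf0, hall, ?_⟩
  intro x hx
  rw [← hgen] at hx
  refine Submodule.span_induction ?_ ?_ ?_ ?_ hx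
  · rintro y ⟨i, rfl⟩; exact hall i
  · rw [mul_zero]
  · intro a b _ _ ha hb; rw [mul_add, ha, hb, add_zero]
  · intro a b _ hb; rw [smul_eq_mul, mul_comm f, mul_assoc, mul_comm b, hb, mul_zero]
end
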